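/- arXiv:1710.07823 — 9 statements merged into one kernel-verified Lean document; each statement's English description precedes it below -/
import Mathlib

section
/- Let l ≥ 2 be an integer and s a real number. The 4×4 determinant det A = det [[2-l(l+1)+6s, 3, 0, 0], [-2s(2s+1), 2s-l(l+1), 4, 0], [0, -4s², -2s-l(l+1), 3], [0, 0, 2s(1-2s), 2-6s-l(l+1)]] vanishes if and only if s = l(l-1)(l+1)(l+2)/6 or s = -l(l-1)(l+1)(l+2)/6. -/
/-! The determinant is a continuant; expanding it, everything collapses to the difference of
squares `(l (l - 1) (l + 1) (l + 2))² - (6 s)²`, whose zeros are the two stated values. -/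

theorem det_tridiagonal_fin_four {R : Type*} [CommRing R] (a₀ a₁ a₂ a₃ b₀ b₁ b₂ c₁ c₂ c₃ : R) :
    Matrix.det !![a₀, b₀, 0, 0; c₁, a₁, b₁, 0; 0, c₂, a₂, b₂; 0, 0, c₃, a₃] =
      a₀ * a₁ * a₂ * a₃ - a₀ * a₁ * b₂ * c₃ - a₀ * b₁ * c₂ * a₃ - b₀ * c₁ * a₂ * a₃ +
        b₀ * c₁ * b₂ * c₃ := by
  rw [Matrix.det_succ_row_zero]
  simp [Fin.sum_univ_succ, Matrix.det_fin_three, Fin.succAbove]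
  ring

theorem det_hautot_G7 {R : Type*} [CommRing R] (L s : R) :
    Matrix.det !![2 - L * (L + 1) + 6 * s, 3, 0, 0;
        -2 * s * (2 * s + 1), 2 * s - L * (L + 1), 4, 0;
        0, -4 * s ^ 2, -2 * s - L * (L + 1), 3;
        0, 0, 2 * s * (1 - 2 * s), 2 - 6 * s - L * (L + 1)] =
      (L * (L - 1) * (L + 1) * (L + 2)) ^ 2 - (6 * s) ^ 2 := by
  rw [det_tridiagonal_fin_four]
  ring

theorem stmt_2_general (l : ℤ) (s : ℝ) :
    Matrix.det !![2 - (l : ℝ) * ((l : ℝ) + 1) + 6 * s, 3, 0, 0;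
        -2 * s * (2 * s + 1), 2 * s - (l : ℝ) * ((l : ℝ) + 1), 4, 0;
        0, -4 * s ^ 2, -2 * s - (l : ℝ) * ((l : ℝ) + 1), 3;
        0, 0, 2 * s * (1 - 2 * s), 2 - 6 * s - (l : ℝ) * ((l : ℝ) + 1)] = 0 ↔
    (s = (l : ℝ) * ((l : ℝ) - 1) * ((l : ℝ) + 1) * ((l : ℝ) + 2) / 6 ∨
      s = -((l : ℝ) * ((l : ℝ) - 1) * ((l : ℝ) + 1) * ((l : ℝ) + 2) / 6)) := by
  rw [det_hautot_G7, sub_eq_zero, sq_eq_sq_iff_eq_or_eq_neg]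
  exact or_congr ⟨fun h => by linarith, fun h => by linarith⟩
    ⟨fun h => by linarith, fun h => by linarith⟩

/-- Hautot's sufficient condition determinant for the family G7 vanishes iff the
frequency takes the algebraically special values. -/
theorem stmt_2 (l : ℤ) (hl : 2 ≤ l) (s : ℝ) :
    Matrix.det !![2 - (l : ℝ) * ((l : ℝ) + 1) + 6 * s, 3, 0, 0;
        -2 * s * (2 * s + 1), 2 * s - (l : ℝ) * ((l : ℝ) + 1), 4, 0;
        0, -4 * s ^ 2, -2 * s - (l : ℝ) * ((l : ℝ) + 1), 3;
        0, 0, 2 * s * (1 - 2 * s), 2 - 6 * s - (l : ℝ) * ((l : ℝ) + 1)] = 0 ↔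
    (s = (l : ℝ) * ((l : ℝ) - 1) * ((l : ℝ) + 1) * ((l : ℝ) + 2) / 6 ∨
      s = -((l : ℝ) * ((l : ℝ) - 1) * ((l : ℝ) + 1) * ((l : ℝ) + 2) / 6)) :=
  stmt_2_general l s
end

section
/- Let l ≥ 2 be an integer, μ² = (l-1)(l+2), σ₀ = l(l-1)(l+1)(l+2)/12 (assumed so that 4σ₀ is a positive integer), and define Pₙ for 0 ≤ n ≤ 4σ₀-1 by Pₙ = 3(-2σ₀)^{n-4σ₀-1}(4σ₀)!(μ²-6σ₀)[(n-4σ₀)μ² - 12σ₀] / (n!(μ²+12σ₀)σ₀μ⁶), together with P_{4σ₀} = (μ²-3)/(σ₀μ⁴) and P_{4σ₀+1} = 1/(2σ₀μ²), and set P₋₁ = P_{4σ₀+2} = 0. Then these coefficients satisfy the recurrence 2σ₀μ²P_{n-1} + [μ²n + 2σ₀(6+2μ²) - μ²]Pₙ + (6+2μ²)(n+1)P_{n+1} = cₙ for all 0 ≤ n ≤ 4σ₀+2, where cₙ = 8 if n = 4σ₀-1, cₙ = 12 if n = 4σ₀, cₙ = 6 if n = 4σ₀+1, cₙ = 1 if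 n = 4σ₀+2, and cₙ = 0 otherwise. -/
/-!
For `0 ≤ n ≤ 4σ₀ - 1` the coefficients are a constant multiple of
`Qₙ = (-2σ₀)ⁿ ((n - 4σ₀)μ² - 12σ₀) / n!`, which solves the homogeneous recurrence identically in
`σ₀` and `μ²`; extended by `Q₋₁ = 0` it still does at `n = 0`, because `Qₙ₋₁` carries the factor
`1/(n-1)!`. So the equations hold with right-hand side `0` up to `n = 4σ₀ - 2`. The four remaining
ones involve only `P_{4σ₀-2}, …, P_{4σ₀+1}`, and once `12σ₀ = μ²(μ²+2)` is substituted they are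
rational identities in `μ²`.
-/

namespace Chandrasekhar

noncomputable def recurrence (σ m : ℝ) (P : ℤ → ℝ) (n : ℤ) : ℝ :=
  2 * σ * m * P (n - 1) + (m * (n : ℝ) + 2 * σ * (6 + 2 * m) - m) * P n +
    (6 + 2 * m) * ((n : ℝ) + 1) * P (n + 1)

noncomputable def homogeneousSol (σ m : ℝ) (n : ℤ) : ℝ :=
  if n < 0 then 0
  else (-2 * σ) ^ n * (((n : ℝ) - 4 * σ) * m - 12 * σ) / (Nat.factorial n.toNat : ℝ)

noncomputable def closedForm (σ m : ℝ) (M : ℕ) (n : ℤ) : ℝ :=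
  3 * (-2 * σ) ^ (n - (M : ℤ) - 1) * (Nat.factorial M : ℝ) * (m - 6 * σ) *
      (((n : ℝ) - (M : ℝ)) * m - 12 * σ) /
    ((Nat.factorial n.toNat : ℝ) * (m + 12 * σ) * σ * m ^ 3)

variable {σ m : ℝ}

theorem recurrence_congr_mul {P Q : ℤ → ℝ} {n : ℤ} (c : ℝ) (hprev : P (n - 1) = c * Q (n - 1))
    (hcur : P n = c * Q n) (hnext : P (n + 1) = c * Q (n + 1)) :
    recurrence σ m P n = c * recurrence σ m Q n := by
  simp only [recurrence, hprev, hcur, hnext]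
  ring

theorem homogeneousSol_of_neg {n : ℤ} (hn : n < 0) : homogeneousSol σ m n = 0 := if_pos hn

theorem homogeneousSol_natCast (k : ℕ) :
    homogeneousSol σ m k =
      (-2 * σ) ^ k * (((k : ℝ) - 4 * σ) * m - 12 * σ) / (Nat.factorial k : ℝ) := by
  simp [homogeneousSol]

theorem recurrence_homogeneousSol {n : ℤ} (hn : 0 ≤ n) :
    recurrence σ m (homogeneousSol σ m) n = 0 := by
  lift n to ℕ using hn
  cases n with
  | zero =>
    norm_num [recurrence, homogeneousSol]
    ring
  | succ k =>
    have hpred : ((k + 1 : ℕ) : ℤ) - 1 = (k : ℕ) := by push_cast; ring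
    have hsucc : ((k + 1 : ℕ) : ℤ) + 1 = (k + 2 : ℕ) := by push_cast; ring
    rw [recurrence, hpred, hsucc, homogeneousSol_natCast, homogeneousSol_natCast,
      homogeneousSol_natCast, Nat.factorial_succ (k + 1), Nat.factorial_succ k]
    have hfact := Nat.factorial_pos k
    push_cast
    field_simp
    ring

theorem closedForm_eq_mul_homogeneousSol {M : ℕ} (hσ : σ ≠ 0) (hM : (M : ℝ) = 4 * σ) {n : ℤ}
    (hn : 0 ≤ n) :
    closedForm σ m M n = 3 * (-2 * σ) ^ (-(M : ℤ) - 1) * (Nat.factorial M : ℝ) * (m - 6 * σ) /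
      ((m + 12 * σ) * σ * m ^ 3) * homogeneousSol σ m n := by
  have hx : -2 * σ ≠ 0 := by simpa using hσ
  rw [closedForm, homogeneousSol, if_neg (not_lt.2 hn),
    show n - (M : ℤ) - 1 = n + (-(M : ℤ) - 1) by ring, zpow_add₀ hx, hM]
  simp only [div_eq_mul_inv, mul_inv]
  ring

section Tail

variable (hm : 0 < m) (hσ : 12 * σ = m * (m + 2))
include hm hσ

theorem closedForm_sub_one {M : ℕ} (hM : (M : ℝ) = 4 * σ) (hM1 : 1 ≤ M) :
    closedForm σ m M (M - 1) = 3 / (2 * σ ^ 2 * m) := by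
  obtain ⟨j, rfl⟩ : ∃ j, M = j + 1 := ⟨M - 1, by omega⟩
  have hj : (j : ℝ) = m * (m + 2) / 3 - 1 := by push_cast at hM; linarith
  obtain rfl : σ = m * (m + 2) / 12 := by linarith
  rw [closedForm, show ((j + 1 : ℕ) : ℤ) - 1 = j by push_cast; ring,
    show (j : ℤ) - ((j + 1 : ℕ) : ℤ) - 1 = -(2 : ℕ) by push_cast; ring,
    zpow_neg, zpow_natCast, Int.toNat_natCast, Nat.factorial_succ]
  push_cast
  rw [hj]
  have hfact := Nat.factorial_pos j
  field_simp
  ring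

theorem closedForm_sub_two {M : ℕ} (hM : (M : ℝ) = 4 * σ) (hM2 : 2 ≤ M) :
    closedForm σ m M (M - 2) = -((m - 1) * (m + 4)) / (4 * σ ^ 3 * m) := by
  obtain ⟨j, rfl⟩ : ∃ j, M = j + 2 := ⟨M - 2, by omega⟩
  have hj : (j : ℝ) = m * (m + 2) / 3 - 2 := by push_cast at hM; linarith
  obtain rfl : σ = m * (m + 2) / 12 := by linarith
  rw [closedForm, show ((j + 2 : ℕ) : ℤ) - 2 = j by push_cast; ring,
    show (j : ℤ) - ((j + 2 : ℕ) : ℤ) - 1 = -(3 : ℕ) by push_cast; ring,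
    zpow_neg, zpow_natCast, Int.toNat_natCast, Nat.factorial_succ, Nat.factorial_succ]
  push_cast
  rw [hj]
  have hfact := Nat.factorial_pos j
  field_simp
  ring

theorem recurrence_tail {P : ℤ → ℝ} {N : ℤ} (hN : (N : ℝ) = 4 * σ)
    (hP₂ : P (N - 2) = -((m - 1) * (m + 4)) / (4 * σ ^ 3 * m))
    (hP₁ : P (N - 1) = 3 / (2 * σ ^ 2 * m)) (hP₀ : P N = (m - 3) / (σ * m ^ 2))
    (hP₁' : P (N + 1) = 1 / (2 * σ * m)) (hP₂' : P (N + 2) = 0) (hP₃' : P (N + 3) = 0) :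
    recurrence σ m P (N - 1) = 8 ∧ recurrence σ m P N = 12 ∧
      recurrence σ m P (N + 1) = 6 ∧ recurrence σ m P (N + 2) = 1 := by
  simp only [recurrence, sub_add_cancel, add_sub_cancel_right]
  rw [show N - 1 - 1 = N - 2 by ring, show N + 2 - 1 = N + 1 by ring,
    show N + 1 + 1 = N + 2 by ring, show N + 2 + 1 = N + 3 by ring,
    hP₂, hP₁, hP₀, hP₁', hP₂', hP₃']
  push_cast
  rw [hN]
  obtain rfl : σ = m * (m + 2) / 12 := by linarith
  refine ⟨?_, ?_, ?_, ?_⟩ <;> field_simp <;> ring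

end Tail

end Chandrasekhar

open Chandrasekhar in
theorem stmt_3_general (l : ℤ) (hl : 2 ≤ l) (σ₀ μ2 : ℝ)
    (hσ : σ₀ = (l : ℝ) * ((l : ℝ) - 1) * ((l : ℝ) + 1) * ((l : ℝ) + 2) / 12)
    (hμ : μ2 = ((l : ℝ) - 1) * ((l : ℝ) + 2))
    (M : ℕ) (hM : (M : ℝ) = 4 * σ₀)
    (P : ℤ → ℝ)
    (hzero : ∀ n : ℤ, n < 0 ∨ (M : ℤ) + 2 ≤ n → P n = 0)
    (hPn : ∀ n : ℤ, 0 ≤ n → n ≤ (M : ℤ) - 1 →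
      P n = 3 * (-2 * σ₀) ^ (n - (M : ℤ) - 1) * (Nat.factorial M : ℝ) * (μ2 - 6 * σ₀) *
          (((n : ℝ) - (M : ℝ)) * μ2 - 12 * σ₀) /
        ((Nat.factorial n.toNat : ℝ) * (μ2 + 12 * σ₀) * σ₀ * μ2 ^ 3))
    (hPM : P (M : ℤ) = (μ2 - 3) / (σ₀ * μ2 ^ 2))
    (hPM1 : P ((M : ℤ) + 1) = 1 / (2 * σ₀ * μ2)) :
    ∀ n : ℤ, 0 ≤ n → n ≤ (M : ℤ) + 2 →
      2 * σ₀ * μ2 * P (n - 1) + (μ2 * (n : ℝ) + 2 * σ₀ * (6 + 2 * μ2) - μ2) * P n +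
          (6 + 2 * μ2) * ((n : ℝ) + 1) * P (n + 1) =
        (if n = (M : ℤ) - 1 then 8
          else if n = (M : ℤ) then 12
          else if n = (M : ℤ) + 1 then 6
          else if n = (M : ℤ) + 2 then 1 else 0) := by
  have hl' : (2 : ℝ) ≤ l := by exact_mod_cast hl
  have hm : 0 < μ2 := by rw [hμ]; nlinarith
  have hσμ : 12 * σ₀ = μ2 * (μ2 + 2) := by rw [hσ, hμ]; ring
  have hσ0 : σ₀ ≠ 0 := by nlinarith
  have hM2 : 2 ≤ M := by exact_mod_cast (show (2 : ℝ) ≤ M by nlinarith)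
  obtain ⟨K, hP⟩ : ∃ K, ∀ n : ℤ, n ≤ (M : ℤ) - 1 → P n = K * homogeneousSol σ₀ μ2 n := by
    refine ⟨3 * (-2 * σ₀) ^ (-(M : ℤ) - 1) * (Nat.factorial M : ℝ) * (μ2 - 6 * σ₀) /
      ((μ2 + 12 * σ₀) * σ₀ * μ2 ^ 3), fun n hn => ?_⟩
    rcases lt_or_ge n 0 with hneg | hnonneg
    · rw [hzero n (.inl hneg), homogeneousSol_of_neg hneg, mul_zero]
    · exact (hPn n hnonneg hn).trans (closedForm_eq_mul_homogeneousSol hσ0 hM hnonneg)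
  obtain ⟨h₈, h₁₂, h₆, h₁⟩ := recurrence_tail hm hσμ (by exact_mod_cast hM)
    ((hPn _ (by omega) (by omega)).trans (closedForm_sub_two hm hσμ hM hM2))
    ((hPn _ (by omega) (by omega)).trans (closedForm_sub_one hm hσμ hM (by omega)))
    hPM hPM1 (hzero _ (.inr le_rfl)) (hzero _ (.inr (by omega)))
  intro n hn0 hnM
  change recurrence σ₀ μ2 P n = _
  rcases (by omega : n ≤ M - 2 ∨ n = M - 1 ∨ n = M ∨ n = M + 1 ∨ n = M + 2)
    with hn | rfl | rfl | rfl | rfl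
  · rw [recurrence_congr_mul _ (hP _ (by omega)) (hP _ (by omega)) (hP _ (by omega)),
      recurrence_homogeneousSol hn0, mul_zero, if_neg (by omega), if_neg (by omega),
      if_neg (by omega), if_neg (by omega)]
  · rwa [if_pos rfl]
  · rwa [if_neg (by omega), if_pos rfl]
  · rwa [if_neg (by omega), if_neg (by omega), if_pos rfl]
  · rwa [if_neg (by omega), if_neg (by omega), if_neg (by omega), if_pos rfl]

/-- The explicit coefficients of the degree-(4σ₀+1) polynomial in Chandrasekhar's second
Liouvillian solution of the Regge–Wheeler equation satisfy the inhomogeneous three-term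
recurrence coming from `(P'(w)+2σ₀P(w))(μ²w+2μ²+6) - μ²P(w) = w^{4σ₀-1}(w+2)³`. -/
theorem stmt_3 (l : ℤ) (hl : 2 ≤ l) (σ₀ μ2 : ℝ)
    (hσ : σ₀ = (l : ℝ) * ((l : ℝ) - 1) * ((l : ℝ) + 1) * ((l : ℝ) + 2) / 12)
    (hμ : μ2 = ((l : ℝ) - 1) * ((l : ℝ) + 2))
    (M : ℕ) (hMpos : 0 < M) (hM : (M : ℝ) = 4 * σ₀)
    (P : ℤ → ℝ)
    (hzero : ∀ n : ℤ, n < 0 ∨ (M : ℤ) + 2 ≤ n → P n = 0)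
    (hPn : ∀ n : ℤ, 0 ≤ n → n ≤ (M : ℤ) - 1 →
      P n = 3 * (-2 * σ₀) ^ (n - (M : ℤ) - 1) * (Nat.factorial M : ℝ) * (μ2 - 6 * σ₀) *
          (((n : ℝ) - (M : ℝ)) * μ2 - 12 * σ₀) /
        ((Nat.factorial n.toNat : ℝ) * (μ2 + 12 * σ₀) * σ₀ * μ2 ^ 3))
    (hPM : P (M : ℤ) = (μ2 - 3) / (σ₀ * μ2 ^ 2))
    (hPM1 : P ((M : ℤ) + 1) = 1 / (2 * σ₀ * μ2)) :
    ∀ n : ℤ, 0 ≤ n → n ≤ (M : ℤ) + 2 →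
      2 * σ₀ * μ2 * P (n - 1) + (μ2 * (n : ℝ) + 2 * σ₀ * (6 + 2 * μ2) - μ2) * P n +
          (6 + 2 * μ2) * ((n : ℝ) + 1) * P (n + 1) =
        (if n = (M : ℤ) - 1 then 8
          else if n = (M : ℤ) then 12
          else if n = (M : ℤ) + 1 then 6
          else if n = (M : ℤ) + 2 then 1 else 0) :=
  stmt_3_general l hl σ₀ μ2 hσ hμ M hM P hzero hPn hPM hPM1
end

section
/- Let s > 1/2 and l be real parameters, and consider the ODE r(r-2)P''(r) + (sr² - 4rs + 2r - 2)P'(r) + (-rs(2s-1) - l(l+1) - 2s)P(r) = 0. Suppose a formal power series P(r) = Σₙ Pₙrⁿ solves the equation; then its coefficients satisfy the three-term recurrence s(n-2s)P_{n-1} + (n² + n - 4sn - l(l+1) - 2s)Pₙ - 2(n+1)²P_{n+1} = 0 (with P₋₁ = 0). In particular, if the series terminates to a polynomial of degree 2s-1 (with 2s an integer ≥ 2), then P_{2s-1}/P_{2s-2} = -s/(l(l+1)+4s²). -/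
/-!
Each term `Xᵏ (d/dX)ʲ` of the operator has `k - j ∈ {-1, 0, 1}`, so comparing coefficients of
`Xⁿ` turns the equation into a three-term recurrence linking `Pₙ₋₁, Pₙ, Pₙ₊₁`. If the series
stops at degree `N - 1 = 2s - 1`, the recurrence at `n = N - 1` loses its `P_N` term and, using
`N = 2s`, reads `s P_{N-2} + (l(l+1) + 4s²) P_{N-1} = 0`.
-/

namespace PowerSeries

variable {R : Type*} [CommRing R]

theorem coeff_X_mul_eq_ite (f : R⟦X⟧) (n : ℕ) :
    coeff n (X * f) = if n = 0 then 0 else coeff (n - 1) f := by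
  cases n <;> simp [coeff_succ_X_mul]

theorem coeff_X_mul_derivative (f : R⟦X⟧) (n : ℕ) :
    coeff n (X * d⁄dX R f) = n * coeff n f := by
  cases n with
  | zero => simp
  | succ n => rw [coeff_succ_X_mul, coeff_derivative]; push_cast; ring

theorem X_sq_mul_derivative (f : R⟦X⟧) :
    (X ^ 2 : R⟦X⟧) * d⁄dX R f = X * d⁄dX R (X * f) - X * f := by
  rw [Derivation.leibniz, derivative_X (R := R), smul_eq_mul, smul_eq_mul]; ring

theorem coeff_X_sq_mul_derivative (f : R⟦X⟧) (n : ℕ) :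
    coeff n (X ^ 2 * d⁄dX R f) = ((n : R) - 1) * coeff n (X * f) := by
  rw [X_sq_mul_derivative, map_sub, coeff_X_mul_derivative]; ring

theorem coeff_secondOrder (a₂ a₁ b₂ b₁ b₀ c₁ c₀ : R) (f : R⟦X⟧) (n : ℕ) :
    coeff n ((C a₂ * X ^ 2 + C a₁ * X) * d⁄dX R (d⁄dX R f) +
        (C b₂ * X ^ 2 + C b₁ * X + C b₀) * d⁄dX R f + (C c₁ * X + C c₀) * f) =
      (b₂ * (n - 1) + c₁) * coeff n (X * f) + (a₂ * n * (n - 1) + b₁ * n + c₀) * coeff n f +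
        (a₁ * n + b₀) * (n + 1) * coeff (n + 1) f := by
  simp only [add_mul, mul_assoc, map_add, coeff_C_mul, coeff_X_sq_mul_derivative,
    coeff_X_mul_derivative, coeff_derivative]
  ring

end PowerSeries

theorem div_eq_neg_div_of_mul_add_mul_eq_zero {K : Type*} [Field K] {a b x y : K} (ha : a ≠ 0)
    (hy : y ≠ 0) (h : a * x + b * y = 0) : y / x = -a / b := by
  by_cases hb : b = 0
  · have hx : x = 0 := by simpa [hb, ha] using h
    simp [hx, hb]
  · have hx : x ≠ 0 := by
      rintro rfl
      simp_all
    rw [div_eq_div_iff hx hb]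
    linear_combination h

open PowerSeries in
theorem stmt_6_general (s l : ℝ) (N : ℕ) (hN2 : 2 ≤ N) (hN : (N : ℝ) = 2 * s)
    (P : ℕ → ℝ)
    (hode :
      (X * (X - C 2)) * derivativeFun (derivativeFun (mk P)) +
        (C s * X ^ 2 - C (4 * s) * X + C 2 * X - C 2) * derivativeFun (mk P) +
        (-(C (s * (2 * s - 1))) * X - C (l * (l + 1)) - C (2 * s)) * mk P = 0) :
    (∀ n : ℕ,
      s * ((n : ℝ) - 2 * s) * (if n = 0 then 0 else P (n - 1)) +
        ((n : ℝ) ^ 2 + (n : ℝ) - 4 * s * (n : ℝ) - l * (l + 1) - 2 * s) * P n -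
        2 * ((n : ℝ) + 1) ^ 2 * P (n + 1) = 0) ∧
    ((∀ n : ℕ, N ≤ n → P n = 0) → P (N - 1) ≠ 0 →
      P (N - 1) / P (N - 2) = -s / (l * (l + 1) + 4 * s ^ 2)) := by
  have hode' : (C 1 * X ^ 2 + C (-2) * X) * d⁄dX ℝ (d⁄dX ℝ (mk P)) +
      (C s * X ^ 2 + C (2 - 4 * s) * X + C (-2)) * d⁄dX ℝ (mk P) +
      (C (-(s * (2 * s - 1))) * X + C (-(l * (l + 1)) - 2 * s)) * mk P = 0 := by
    have hD : ∀ f : ℝ⟦X⟧, derivativeFun f = d⁄dX ℝ f := fun _ => rfl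
    rw [hD, hD] at hode
    rw [← hode]
    simp only [map_one, map_neg, map_sub]
    ring
  have hrec : ∀ n : ℕ,
      s * ((n : ℝ) - 2 * s) * (if n = 0 then 0 else P (n - 1)) +
        ((n : ℝ) ^ 2 + (n : ℝ) - 4 * s * (n : ℝ) - l * (l + 1) - 2 * s) * P n -
        2 * ((n : ℝ) + 1) ^ 2 * P (n + 1) = 0 := fun n => by
    have h := congrArg (coeff n) hode'
    rw [coeff_secondOrder, coeff_X_mul_eq_ite, map_zero] at h
    simp only [coeff_mk] at h
    linear_combination h
  refine ⟨hrec, fun hterm htop => ?_⟩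
  obtain ⟨m, rfl⟩ : ∃ m, N = m + 2 := ⟨N - 2, by omega⟩
  push_cast at hN
  have hs : s ≠ 0 := by linarith [(m.cast_nonneg : (0 : ℝ) ≤ m)]
  have hrel : s * P m + (l * (l + 1) + 4 * s ^ 2) * P (m + 1) = 0 := by
    have h := hrec (m + 1)
    rw [if_neg m.succ_ne_zero, Nat.add_sub_cancel, hterm (m + 1 + 1) le_rfl] at h
    push_cast at h
    linear_combination -h + (s * P m + (m + 1 - 2 * s) * P (m + 1)) * hN
  simpa using div_eq_neg_div_of_mul_add_mul_eq_zero hs htop hrel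

open PowerSeries in
/-- Family S3 (scalar perturbations): a formal power series solution of the ODE has
coefficients satisfying the three-term recurrence, and if it terminates to a polynomial of
degree `2s-1` then the ratio of the two top coefficients is `-s/(l(l+1)+4s²)`. -/
theorem stmt_6 (s l : ℝ) (hs : 1 / 2 < s) (N : ℕ) (hN2 : 2 ≤ N) (hN : (N : ℝ) = 2 * s)
    (P : ℕ → ℝ)
    (hode :
      (X * (X - C 2)) * derivativeFun (derivativeFun (mk P)) +
        (C s * X ^ 2 - C (4 * s) * X + C 2 * X - C 2) * derivativeFun (mk P) +
        (-(C (s * (2 * s - 1))) * X - C (l * (l + 1)) - C (2 * s)) * mk P = 0) :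
    (∀ n : ℕ,
      s * ((n : ℝ) - 2 * s) * (if n = 0 then 0 else P (n - 1)) +
        ((n : ℝ) ^ 2 + (n : ℝ) - 4 * s * (n : ℝ) - l * (l + 1) - 2 * s) * P n -
        2 * ((n : ℝ) + 1) ^ 2 * P (n + 1) = 0) ∧
    ((∀ n : ℕ, N ≤ n → P n = 0) → P (N - 1) ≠ 0 →
      P (N - 1) / P (N - 2) = -s / (l * (l + 1) + 4 * s ^ 2)) :=
  stmt_6_general s l N hN2 hN P hode
end

section
/- Let a, b, c, d, e, f be complex numbers and n a natural number. If the ODE z(z-1)P''(z) + (az² + bz + c)P'(z) + (d + ez + fz²)P(z) = 0 admits a polynomial solution P of degree exactly n with a ≠ 0, then f = 0 and e = -an, and the coefficients λₖ of P(z) = Σ_{k=0}^{n} λₖzᵏ satisfy the three-term recurrence a(k-1-n)λ_{k-1} + (d + k(b+k-1))λₖ + (c-k)(k+1)λ_{k+1} = 0 for all k ≥ 0 (with λ₋₁ = 0 and λ_{k} = 0 for k > n). -/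
open Polynomial

private lemma cX (p : Polynomial ℂ) (k : ℕ) :
    (X * p).coeff k = if k = 0 then 0 else p.coeff (k-1) := by
  cases k with
  | zero => simp
  | succ m => simp [coeff_X_mul]

private lemma cX2 (p : Polynomial ℂ) (k : ℕ) :
    (X^2 * p).coeff k = if k < 2 then 0 else p.coeff (k-2) := by
  match k with
  | 0 => simp [pow_two, mul_assoc, cX]
  | 1 => simp [pow_two, mul_assoc, cX]
  | (m+2) => simp [coeff_X_pow_mul p 2 m]

/-- Hautot's necessary conditions for a polynomial solution of degree `n` of the general
confluent Heun equation `z(z-1)P'' + (az²+bz+c)P' + (d+ez+fz²)P = 0`. -/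
theorem stmt_8 (a b c d e f : ℂ) (n : ℕ) (P : Polynomial ℂ)
    (hP : P ≠ 0) (hdeg : P.natDegree = n) (ha : a ≠ 0)
    (hode :
      X * (X - C 1) * derivative (derivative P) +
        (C a * X ^ 2 + C b * X + C c) * derivative P +
        (C d + C e * X + C f * X ^ 2) * P = 0) :
    f = 0 ∧ e = -a * n ∧
      ∀ k : ℕ,
        a * ((k : ℂ) - 1 - n) * (if k = 0 then 0 else P.coeff (k - 1)) +
          (d + (k : ℂ) * (b + (k : ℂ) - 1)) * P.coeff k +
          (c - (k : ℂ)) * ((k : ℂ) + 1) * P.coeff (k + 1) = 0 := by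
  rw [C_1] at hode
  have hlead : P.coeff n ≠ 0 := by
    rw [← hdeg]; exact fun h => hP (leadingCoeff_eq_zero.mp h)
  have hz : ∀ k, n < k → P.coeff k = 0 := fun k hk =>
    coeff_eq_zero_of_natDegree_lt (hdeg ▸ hk)
  have hode' : X^2 * (derivative (derivative P)) - X * (derivative (derivative P)) +
      (C a * (X^2 * derivative P) + C b * (X * derivative P) + C c * derivative P) +
      (C d * P + C e * (X * P) + C f * (X^2 * P)) = 0 := by linear_combination hode
  -- coefficient equations
  have H2 : ∀ m : ℕ, f * P.coeff m + (a * ((m:ℂ)+1) + e) * P.coeff (m+1) +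
      (d + ((m:ℂ)+2) * (b + (m:ℂ)+1)) * P.coeff (m+2) +
      (c - ((m:ℂ)+2)) * ((m:ℂ)+3) * P.coeff (m+3) = 0 := by
    intro m
    have h := congrArg (fun q => Polynomial.coeff q (m+2)) hode'
    simp only [coeff_add, coeff_sub, coeff_C_mul, coeff_zero, cX, cX2, coeff_derivative] at h
    simp at h
    push_cast at h ⊢
    linear_combination h
  have H1 : e * P.coeff 0 + (d + b) * P.coeff 1 + (c - 1) * 2 * P.coeff 2 = 0 := by
    have h := congrArg (fun q => Polynomial.coeff q 1) hode'
    simp only [coeff_add, coeff_sub, coeff_C_mul, coeff_zero, cX, cX2, coeff_derivative] at h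
    simp at h
    linear_combination h
  have H0 : d * P.coeff 0 + c * P.coeff 1 = 0 := by
    have h := congrArg (fun q => Polynomial.coeff q 0) hode'
    simp only [coeff_add, coeff_sub, coeff_C_mul, coeff_zero, cX, cX2, coeff_derivative] at h
    simp at h
    linear_combination h
  -- f = 0
  have hf : f = 0 := by
    have h := H2 n
    rw [hz (n+1) (by omega), hz (n+2) (by omega), hz (n+3) (by omega)] at h
    have : f * P.coeff n = 0 := by linear_combination h
    rcases mul_eq_zero.mp this with h' | h'
    · exact h'
    · exact absurd h' hlead
  -- e = -a*n
  have he : e = -a * n := by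
    rcases Nat.eq_zero_or_pos n with h0 | h0
    · subst h0
      have h := H1
      rw [hz 1 (by omega), hz 2 (by omega)] at h
      simp at h
      rcases h with h' | h'
      · simp [h']
      · exact absurd h' hlead
    · obtain ⟨m, rfl⟩ : ∃ m, n = m + 1 := ⟨n - 1, by omega⟩
      have h := H2 m
      rw [hz (m+2) (by omega), hz (m+3) (by omega), hf] at h
      have h' : (a * ((m:ℂ)+1) + e) * P.coeff (m+1) = 0 := by linear_combination h
      rcases mul_eq_zero.mp h' with h'' | h''
      · push_cast
        linear_combination h''
      · exact absurd h'' hlead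
  refine ⟨hf, he, fun k => ?_⟩
  cases k with
  | zero => simpa using H0
  | succ m =>
    cases m with
    | zero =>
      simp only [if_neg (by omega : ¬ (1:ℕ) = 0)]
      rw [he] at H1
      push_cast at H1 ⊢
      linear_combination H1
    | succ j =>
      simp only [if_neg (by omega : ¬ (j+2:ℕ) = 0)]
      have h := H2 j
      rw [hf, he] at h
      push_cast at h ⊢
      linear_combination h
end

section
/- Let s be such that 2s is a positive integer, and let p(z) be a solution of the confluent Heun equation z(z-1)p''(z) + (3 - 2z(2s+1) + 2z²s)p'(z) + (2 - l(l+1) + 6s - 2zs(2s+1))p(z) = 0 (family G7). Then p₁(z) := z^{-4}p(z), whenever p(z) = z⁴p₁(z) for some function p₁, satisfies the confluent Heun equation z(z-1)p₁''(z) + (-5 - 2z(2s-3) + 2z²s)p₁'(z) + (6 - l(l+1) - 10s - 2zs(2s-3))p₁(z) = 0 (family G3). That is: p₁ solves the G3 equation if and only if z⁴p₁ solves the G7 equation. -/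
/-!
Writing `p = z⁴ p₁`, the Leibniz rule turns the G7 operator applied to `p` into `z⁴` times the
G3 operator applied to `p₁`: the exponent `4 = 1 + c` is a root of the indicial equation of G7 at
`z = 0`, so no `z⁻¹` terms survive. Hence the G3 equation implies the G7 equation, and conversely
the G7 equation forces the G3 expression to vanish for `z ≠ 0`, hence everywhere by continuity.
-/

section Leibniz

variable {𝕜 : Type*} [NontriviallyNormedField 𝕜] {f : 𝕜 → 𝕜}

theorem hasDerivAt_pow_mul (n : ℕ) {z : 𝕜} (hf : DifferentiableAt 𝕜 f z) :
    HasDerivAt (fun x => x ^ n * f x) (n * z ^ (n - 1) * f z + z ^ n * deriv f z) z :=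
  (hasDerivAt_pow n z).fun_mul hf.hasDerivAt

theorem deriv_pow_mul (n : ℕ) (hf : Differentiable 𝕜 f) :
    deriv (fun x => x ^ n * f x) = fun z => n * z ^ (n - 1) * f z + z ^ n * deriv f z :=
  funext fun z => (hasDerivAt_pow_mul n (hf z)).deriv

theorem deriv_deriv_pow_mul (n : ℕ) (hf : Differentiable 𝕜 f)
    (hf' : Differentiable 𝕜 (deriv f)) (z : 𝕜) :
    deriv (deriv fun x => x ^ n * f x) z =
      n * (n - 1 : ℕ) * z ^ (n - 2) * f z + 2 * n * z ^ (n - 1) * deriv f z +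
        z ^ n * deriv (deriv f) z := by
  have hfirst : HasDerivAt (fun x => n * x ^ (n - 1) * f x)
      (n * ((n - 1 : ℕ) * z ^ (n - 2) * f z + z ^ (n - 1) * deriv f z)) z := by
    simpa only [mul_assoc, Nat.sub_sub] using (hasDerivAt_pow_mul (n - 1) (hf z)).const_mul (n : 𝕜)
  rw [deriv_pow_mul n hf, (hfirst.fun_add (hasDerivAt_pow_mul n (hf' z))).deriv]
  ring

end Leibniz

theorem eq_zero_of_pow_mul_eq_zero {𝕜 : Type*} [NontriviallyNormedField 𝕜] {F : 𝕜 → 𝕜}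
    (hF : Continuous F) (n : ℕ) (h : ∀ z, z ^ n * F z = 0) : F = 0 :=
  hF.ext_on (dense_compl_singleton 0) continuous_const fun z hz =>
    (mul_eq_zero.mp (h z)).resolve_left (pow_ne_zero n hz)

noncomputable def heunG3 (s l : ℝ) (p : ℝ → ℝ) (z : ℝ) : ℝ :=
  z * (z - 1) * deriv (deriv p) z + (-5 - 2 * z * (2 * s - 3) + 2 * z ^ 2 * s) * deriv p z +
    (6 - l * (l + 1) - 10 * s - 2 * z * s * (2 * s - 3)) * p z

noncomputable def heunG7 (s l : ℝ) (p : ℝ → ℝ) (z : ℝ) : ℝ :=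
  z * (z - 1) * deriv (deriv p) z + (3 - 2 * z * (2 * s + 1) + 2 * z ^ 2 * s) * deriv p z +
    (2 - l * (l + 1) + 6 * s - 2 * z * s * (2 * s + 1)) * p z

theorem heunG7_pow_four_mul (s l : ℝ) {p : ℝ → ℝ} (hp : Differentiable ℝ p)
    (hp' : Differentiable ℝ (deriv p)) (z : ℝ) :
    heunG7 s l (fun x => x ^ 4 * p x) z = z ^ 4 * heunG3 s l p z := by
  rw [heunG7, heunG3, deriv_deriv_pow_mul 4 hp hp', deriv_pow_mul 4 hp]
  norm_num
  ring

theorem continuous_heunG3 (s l : ℝ) {p : ℝ → ℝ} (hp : ContDiff ℝ 2 p) :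
    Continuous (heunG3 s l p) := by
  have hp' : ContDiff ℝ 1 (deriv p) := hp.deriv'
  have := hp'.continuous_deriv le_rfl
  unfold heunG3
  fun_prop

theorem stmt_9_general (s l : ℝ)
    (p₁ : ℝ → ℝ) (hp₁ : ContDiff ℝ 2 p₁) :
    (∀ z : ℝ,
      z * (z - 1) * deriv (deriv p₁) z +
        (-5 - 2 * z * (2 * s - 3) + 2 * z ^ 2 * s) * deriv p₁ z +
        (6 - l * (l + 1) - 10 * s - 2 * z * s * (2 * s - 3)) * p₁ z = 0) ↔
    (∀ z : ℝ,
      z * (z - 1) * deriv (deriv fun x => x ^ 4 * p₁ x) z +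
        (3 - 2 * z * (2 * s + 1) + 2 * z ^ 2 * s) * deriv (fun x => x ^ 4 * p₁ x) z +
        (2 - l * (l + 1) + 6 * s - 2 * z * s * (2 * s + 1)) * (z ^ 4 * p₁ z) = 0) := by
  change (∀ z, heunG3 s l p₁ z = 0) ↔ ∀ z, heunG7 s l (fun x => x ^ 4 * p₁ x) z = 0
  have hp : Differentiable ℝ p₁ := hp₁.differentiable two_ne_zero
  have hp' : Differentiable ℝ (deriv p₁) := hp₁.deriv'.differentiable one_ne_zero
  simp only [heunG7_pow_four_mul s l hp hp']
  refine ⟨fun h z => by rw [h z, mul_zero], fun h => ?_⟩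
  exact congrFun (eq_zero_of_pow_mul_eq_zero (continuous_heunG3 s l hp₁) 4 h)

/-- The homotopic transformation `p(z) = z⁴p₁(z)` relating the confluent Heun equations of
the Kovacic families G7 and G3: `p₁` solves the G3 equation iff `z⁴p₁` solves the G7
equation. -/
theorem stmt_9 (s l : ℝ) (N : ℕ) (hNpos : 0 < N) (hN : (N : ℝ) = 2 * s)
    (p₁ : ℝ → ℝ) (hp₁ : ContDiff ℝ 2 p₁) :
    (∀ z : ℝ,
      z * (z - 1) * deriv (deriv p₁) z +
        (-5 - 2 * z * (2 * s - 3) + 2 * z ^ 2 * s) * deriv p₁ z +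
        (6 - l * (l + 1) - 10 * s - 2 * z * s * (2 * s - 3)) * p₁ z = 0) ↔
    (∀ z : ℝ,
      z * (z - 1) * deriv (deriv fun x => x ^ 4 * p₁ x) z +
        (3 - 2 * z * (2 * s + 1) + 2 * z ^ 2 * s) * deriv (fun x => x ^ 4 * p₁ x) z +
        (2 - l * (l + 1) + 6 * s - 2 * z * s * (2 * s + 1)) * (z ^ 4 * p₁ z) = 0) :=
  stmt_9_general s l p₁ hp₁
end

section
/- Let l ≥ 2 be an integer and s = l(l-1)(l+1)(l+2)/6, and define φ(2s+1; u) = u^{2s}(1 - u/(2s+1)), φ(2s; u) = u^{2s}, F₂(u) = Σ_{m=0}^{2s-1} uᵐ/m! (the truncated hypergeometric F(-(2s-1), 1-2s; u)), F₃(u) = Σ_{m=0}^{2s-2} ((m+1-2s)/(1-2s))·uᵐ/m! (the truncated hypergeometric F(-(2s-2), 1-2s; u)). With A₀ arbitrary, A₁ = -(l²+l+1)A₀/(2s+1), A₂ = -3(2s)!A₀/(2s+1), A₃ = -(l²+l-3)(2s)!A₀/(2s+1), the function P(u) = A₀φ(2s+1;u) + A₁φ(2s;u) + A₂F₂(u)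 + A₃F₃(u) is a polynomial solution of degree 2s+1 of the equation u(u-2s)P'' + (-u² - 2u - 2s(-2s+1))P' + ((2s+1)u + 2 - l(l+1) + 4s(1-s))P = 0. -/
open Polynomial Finset

noncomputable def hA (N : ℕ) (L A₀ : ℝ) : ℕ → ℝ := fun k =>
  if k = N + 1 then -A₀ / ((N : ℝ) + 1)
  else if k = N then ((N : ℝ) - L) / ((N : ℝ) + 1) * A₀
  else if k < N then
    ((-(3 * (Nat.factorial N : ℝ) / ((N : ℝ) + 1)) * A₀) +
      (-((L - 3) * (Nat.factorial N : ℝ) / ((N : ℝ) + 1)) * A₀) *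
        (((k : ℝ) + 1 - (N : ℝ)) / (1 - (N : ℝ)))) / (Nat.factorial k : ℝ)
  else 0

noncomputable def hQ (N : ℕ) (L A₀ : ℝ) : Polynomial ℝ :=
  ∑ k ∈ Finset.range (N + 2), Polynomial.C (hA N L A₀ k) * Polynomial.X ^ k

lemma hA_big {N k : ℕ} (L A₀ : ℝ) (h : N + 1 < k) : hA N L A₀ k = 0 := by
  rw [hA]
  rw [if_neg (by omega), if_neg (by omega), if_neg (by omega)]

lemma hA_lt {N k : ℕ} (L A₀ : ℝ) (h : k < N) : hA N L A₀ k =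
    ((-(3 * (Nat.factorial N : ℝ) / ((N : ℝ) + 1)) * A₀) +
      (-((L - 3) * (Nat.factorial N : ℝ) / ((N : ℝ) + 1)) * A₀) *
        (((k : ℝ) + 1 - (N : ℝ)) / (1 - (N : ℝ)))) / (Nat.factorial k : ℝ) := by
  rw [hA, if_neg (by omega), if_neg (by omega), if_pos h]

lemma hQ_coeff (N : ℕ) (L A₀ : ℝ) (k : ℕ) : (hQ N L A₀).coeff k = hA N L A₀ k := by
  rw [hQ]
  rw [Polynomial.finset_sum_coeff]
  simp only [Polynomial.coeff_C_mul, Polynomial.coeff_X_pow, mul_ite, mul_one, mul_zero]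
  rw [Finset.sum_ite_eq (Finset.range (N+2)) k (hA N L A₀)]
  split_ifs with h
  · rfl
  · rw [hA_big]; simp at h; omega

set_option maxHeartbeats 2000000 in
lemma hR_zero (N : ℕ) (hN8 : 8 ≤ N) (L A₀ : ℝ) (hkey : L^2 = 2*L + 3*(N:ℝ)) :
    X * (X - C (N:ℝ)) * (derivative (derivative (hQ N L A₀)))
      + (-X^2 - C 2 * X + C ((N:ℝ)*((N:ℝ)-1))) * derivative (hQ N L A₀)
      + (C ((N:ℝ)+1) * X + C (2 - L + 2*(N:ℝ) - (N:ℝ)^2)) * hQ N L A₀ = 0 := by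
  set Q := hQ N L A₀ with hQdef
  have hq : ∀ k, Q.coeff k = hA N L A₀ k := hQ_coeff N L A₀
  have hq1 : ∀ k, (derivative Q).coeff k = ((k:ℝ)+1) * hA N L A₀ (k+1) := by
    intro k; rw [coeff_derivative, hq]; ring
  have hq2 : ∀ k, (derivative (derivative Q)).coeff k =
      ((k:ℝ)+1) * (((k:ℝ)+2) * hA N L A₀ (k+2)) := by
    intro k; rw [coeff_derivative, hq1]; push_cast; ring
  have cX0 : ∀ (p : Polynomial ℝ) (m : ℕ), (X * p).coeff (m+1) = p.coeff m :=
    fun p m => Polynomial.coeff_X_mul p m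
  have expand : X * (X - C (N:ℝ)) * (derivative (derivative Q))
      + (-X^2 - C 2 * X + C ((N:ℝ)*((N:ℝ)-1))) * derivative Q
      + (C ((N:ℝ)+1) * X + C (2 - L + 2*(N:ℝ) - (N:ℝ)^2)) * Q
      = X * (X * (derivative (derivative Q))) - C (N:ℝ) * (X * derivative (derivative Q))
        - X * (X * derivative Q) - C 2 * (X * derivative Q)
        + C ((N:ℝ)*((N:ℝ)-1)) * derivative Q
        + C ((N:ℝ)+1) * (X * Q) + C (2 - L + 2*(N:ℝ) - (N:ℝ)^2) * Q := by ring
  rw [expand]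
  apply Polynomial.ext
  intro k
  rw [Polynomial.coeff_zero]
  simp only [coeff_add, coeff_sub, Polynomial.coeff_C_mul]
  rcases k with _ | k
  · simp only [Polynomial.mul_coeff_zero, Polynomial.coeff_X_zero, zero_mul, hq, hq1]
    rw [hA_lt L A₀ (show 0 < N by omega), hA_lt L A₀ (show 0+1 < N by omega)]
    have hfge : (8:ℝ) ≤ (N:ℝ) := by exact_mod_cast hN8
    have hNL : (N:ℝ) = (L^2 - 2*L)/3 := by linarith
    have d1 : (1:ℝ) - (N:ℝ) ≠ 0 := by intro h; nlinarith
    have d2 : (N:ℝ) + 1 ≠ 0 := by positivity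
    norm_num [Nat.factorial]
    field_simp
    rw [hNL]
    ring
  rcases k with _ | j
  · simp only [cX0, hq, hq1, hq2, Polynomial.mul_coeff_zero, Polynomial.coeff_X_zero, zero_mul]
    rw [hA_lt L A₀ (show 0+2 < N by omega), hA_lt L A₀ (show 0+1 < N by omega),
        hA_lt L A₀ (show 0 < N by omega)]
    have hfge : (8:ℝ) ≤ (N:ℝ) := by exact_mod_cast hN8
    have hNL : (N:ℝ) = (L^2 - 2*L)/3 := by linarith
    have d1 : (1:ℝ) - (N:ℝ) ≠ 0 := by intro h; nlinarith
    have d2 : (N:ℝ) + 1 ≠ 0 := by positivity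
    norm_num [Nat.factorial]
    field_simp
    rw [hNL]
    ring
  · simp only [cX0, hq, hq1, hq2]
    have hfge : (8:ℝ) ≤ (N:ℝ) := by exact_mod_cast hN8
    have d1 : (1:ℝ) - (N:ℝ) ≠ 0 := by intro h; nlinarith
    have d2 : (N:ℝ) + 1 ≠ 0 := by positivity
    have dF : ((Nat.factorial (j+1)):ℝ) ≠ 0 := Nat.cast_ne_zero.mpr (Nat.factorial_ne_zero _)
    rcases lt_trichotomy (j+3) N with hc | hc | hc
    · -- generic interior case
      rw [hA_lt L A₀ (show j+1+2 < N by omega), hA_lt L A₀ (show j+2 < N by omega),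
          hA_lt L A₀ (show j+1 < N by omega)]
      have hNL : (N:ℝ) = (L^2 - 2*L)/3 := by linarith
      have hf3 : ((Nat.factorial (j+1+2)):ℝ) = ((j:ℝ)+3)*((j:ℝ)+2) * ((Nat.factorial (j+1)):ℝ) := by
        rw [show j+1+2 = ((j+1)+1)+1 from rfl, Nat.factorial_succ, Nat.factorial_succ]
        push_cast; ring
      have hf2 : ((Nat.factorial (j+2)):ℝ) = ((j:ℝ)+2) * ((Nat.factorial (j+1)):ℝ) := by
        rw [show j+2 = (j+1)+1 from rfl, Nat.factorial_succ]
        push_cast; ring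
      rw [hf3, hf2]
      push_cast
      field_simp
      rw [hNL]
      ring
    · -- k = N - 1
      rw [hA_lt L A₀ (show j+2 < N by omega), hA_lt L A₀ (show j+1 < N by omega)]
      have hv : hA N L A₀ (j+1+2) = ((N:ℝ)-L)/((N:ℝ)+1)*A₀ := by
        rw [hA, if_neg (by omega), if_pos (show j+1+2 = N by omega)]
      rw [hv]
      have hNr : (N:ℝ) = (j:ℝ)+3 := by rw [← hc]; push_cast; ring
      have hf2 : ((Nat.factorial (j+2)):ℝ) = ((j:ℝ)+2) * ((Nat.factorial (j+1)):ℝ) := by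
        rw [show j+2 = (j+1)+1 from rfl, Nat.factorial_succ]
        push_cast; ring
      rw [hf2]
      rw [hNr] at d1 d2 ⊢
      push_cast
      field_simp
      ring
    · by_cases h2 : j+2 = N
      · -- k = N
        rw [hA_lt L A₀ (show j+1 < N by omega)]
        have hvN : hA N L A₀ (j+2) = ((N:ℝ)-L)/((N:ℝ)+1)*A₀ := by
          rw [hA, if_neg (by omega), if_pos h2]
        have hvT : hA N L A₀ (j+1+2) = -A₀/((N:ℝ)+1) := by
          rw [hA, if_pos (by omega)]
        rw [hvN, hvT]
        have hNr : (N:ℝ) = (j:ℝ)+2 := by rw [← h2]; push_cast; ring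
        have hfN : ((Nat.factorial N):ℝ) = ((j:ℝ)+2) * ((Nat.factorial (j+1)):ℝ) := by
          rw [← h2, show j+2 = (j+1)+1 from rfl, Nat.factorial_succ]
          push_cast; ring
        rw [hfN]
        rw [hNr] at d1 d2 hkey ⊢
        have hj : (j:ℝ) = (L^2 - 2*L - 6)/3 := by linarith
        push_cast
        field_simp
        rw [hj]
        ring
      · by_cases h1 : j+1 = N
        · -- k = N + 1
          have hvN : hA N L A₀ (j+1) = ((N:ℝ)-L)/((N:ℝ)+1)*A₀ := by
            rw [hA, if_neg (by omega), if_pos h1]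
          have hvT : hA N L A₀ (j+2) = -A₀/((N:ℝ)+1) := by
            rw [hA, if_pos (by omega)]
          have hvB : hA N L A₀ (j+1+2) = 0 := hA_big L A₀ (by omega)
          rw [hvN, hvT, hvB]
          have hNr : (N:ℝ) = (j:ℝ)+1 := by rw [← h1]; push_cast; ring
          rw [hNr] at d2 ⊢
          push_cast
          field_simp
          ring
        · by_cases h0 : j = N
          · -- k = N + 2
            have hvT : hA N L A₀ (j+1) = -A₀/((N:ℝ)+1) := by
              rw [hA, if_pos (by omega)]
            have hv2 : hA N L A₀ (j+2) = 0 := hA_big L A₀ (by omega)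
            have hv3 : hA N L A₀ (j+1+2) = 0 := hA_big L A₀ (by omega)
            rw [hvT, hv2, hv3]
            have hNr : (N:ℝ) = (j:ℝ) := by rw [h0]
            rw [hNr]
            push_cast
            ring
          · -- k > N + 2
            have hv1 : hA N L A₀ (j+1) = 0 := hA_big L A₀ (by omega)
            have hv2 : hA N L A₀ (j+2) = 0 := hA_big L A₀ (by omega)
            have hv3 : hA N L A₀ (j+1+2) = 0 := hA_big L A₀ (by omega)
            rw [hv1, hv2, hv3]
            ring

lemma hQ_eval (N : ℕ) (hN8 : 8 ≤ N) (L A₀ : ℝ) (u : ℝ) :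
    (hQ N L A₀).eval u =
      A₀ * (u ^ N * (1 - u / ((N : ℝ) + 1))) + (-((L + 1) / ((N : ℝ) + 1)) * A₀) * u ^ N +
        (-(3 * (Nat.factorial N : ℝ) / ((N : ℝ) + 1)) * A₀) *
          (∑ m ∈ Finset.range N, u ^ m / (Nat.factorial m : ℝ)) +
        (-(((L - 3) * (Nat.factorial N : ℝ)) / ((N : ℝ) + 1)) * A₀) *
          (∑ m ∈ Finset.range (N - 1),
            (((m : ℝ) + 1 - (N : ℝ)) / (1 - (N : ℝ))) * u ^ m / (Nat.factorial m : ℝ)) := by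
  obtain ⟨n, rfl⟩ : ∃ n, N = n + 2 := ⟨N - 2, by omega⟩
  have he : (hQ (n+2) L A₀).eval u = ∑ k ∈ Finset.range (n + 4), hA (n+2) L A₀ k * u ^ k := by
    rw [hQ]
    rw [Polynomial.eval_finset_sum]
    apply Finset.sum_congr rfl
    intro k _
    simp
  rw [he]
  rw [show n + 4 = (n + 3) + 1 from rfl, Finset.sum_range_succ,
      show n + 3 = (n + 2) + 1 from rfl, Finset.sum_range_succ]
  have h1 : hA (n+2) L A₀ (n+3) = -A₀ / ((n:ℝ) + 2 + 1) := by
    rw [hA, if_pos rfl]; push_cast; ring_nf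
  have h2 : hA (n+2) L A₀ (n+2) = (((n:ℝ)+2) - L) / (((n:ℝ)+2) + 1) * A₀ := by
    rw [hA, if_neg (by omega), if_pos rfl]; push_cast; ring_nf
  have h3 : ∑ k ∈ Finset.range (n+2), hA (n+2) L A₀ k * u ^ k =
      (-(3 * (Nat.factorial (n+2) : ℝ) / (((n:ℝ)+2) + 1)) * A₀) *
          (∑ m ∈ Finset.range (n+2), u ^ m / (Nat.factorial m : ℝ)) +
        (-((L - 3) * (Nat.factorial (n+2) : ℝ) / (((n:ℝ)+2) + 1)) * A₀) *
          (∑ m ∈ Finset.range (n+2),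
            (((m : ℝ) + 1 - ((n:ℝ)+2)) / (1 - ((n:ℝ)+2))) * u ^ m / (Nat.factorial m : ℝ)) := by
    rw [Finset.mul_sum, Finset.mul_sum, ← Finset.sum_add_distrib]
    apply Finset.sum_congr rfl
    intro k hk
    rw [hA_lt L A₀ (Finset.mem_range.mp hk)]
    push_cast
    ring
  -- extend the (N-1)-sum on the RHS by a vanishing top term
  have h4 : ∑ m ∈ Finset.range (n+2),
      (((m : ℝ) + 1 - ((n:ℝ)+2)) / (1 - ((n:ℝ)+2))) * u ^ m / (Nat.factorial m : ℝ) =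
      ∑ m ∈ Finset.range (n + 2 - 1),
      (((m : ℝ) + 1 - ((n:ℝ)+2)) / (1 - ((n:ℝ)+2))) * u ^ m / (Nat.factorial m : ℝ) := by
    rw [show n + 2 = (n+1)+1 from rfl, Finset.sum_range_succ]
    have hz : (((n+1 : ℕ) : ℝ) + 1 - ((n:ℝ)+2)) = 0 := by push_cast; ring
    rw [hz]
    simp
  rw [h1]
  rw [h2]
  rw [h3]
  rw [h4]
  have hne : ((n:ℝ)+3) ≠ 0 := by positivity
  push_cast
  field_simp
  ring

lemma hQ_natDegree (N : ℕ) (L A₀ : ℝ) (hA₀ : A₀ ≠ 0) : (hQ N L A₀).natDegree = N + 1 := by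
  apply le_antisymm
  · rw [Polynomial.natDegree_le_iff_coeff_eq_zero]
    intro m hm
    rw [hQ_coeff]
    exact hA_big _ _ hm
  · apply Polynomial.le_natDegree_of_ne_zero
    rw [hQ_coeff, hA, if_pos rfl]
    apply div_ne_zero (neg_ne_zero.mpr hA₀)
    positivity

/-- Extension of Hautot's expansion theorem: the combination of the two quasi-polynomial
solutions `φ` and the two truncated confluent hypergeometric functions, with the given
coefficients, is a polynomial solution of degree `2s+1` of the confluent Heun equation
associated with Chandrasekhar's second Liouvillian solution. -/
theorem stmt_11 (l : ℤ) (hl : 2 ≤ l) (s : ℝ)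
    (hs : s = (l : ℝ) * ((l : ℝ) - 1) * ((l : ℝ) + 1) * ((l : ℝ) + 2) / 6)
    (N : ℕ) (hN : (N : ℝ) = 2 * s)
    (A₀ : ℝ) (hA₀ : A₀ ≠ 0) :
    let A₁ : ℝ := -(((l : ℝ) ^ 2 + (l : ℝ) + 1) / (2 * s + 1)) * A₀
    let A₂ : ℝ := -(3 * (Nat.factorial N : ℝ) / (2 * s + 1)) * A₀
    let A₃ : ℝ := -((((l : ℝ) ^ 2 + (l : ℝ) - 3) * (Nat.factorial N : ℝ)) / (2 * s + 1)) * A₀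
    let P : ℝ → ℝ := fun u =>
      A₀ * (u ^ N * (1 - u / (2 * s + 1))) + A₁ * u ^ N +
        A₂ * (∑ m ∈ Finset.range N, u ^ m / (Nat.factorial m : ℝ)) +
        A₃ * (∑ m ∈ Finset.range (N - 1),
          (((m : ℝ) + 1 - 2 * s) / (1 - 2 * s)) * u ^ m / (Nat.factorial m : ℝ))
    (∀ u : ℝ,
      u * (u - 2 * s) * deriv (deriv P) u +
        (-u ^ 2 - 2 * u - 2 * s * (-2 * s + 1)) * deriv P u +
        ((2 * s + 1) * u + 2 - (l : ℝ) * ((l : ℝ) + 1) + 4 * s * (1 - s)) * P u = 0) ∧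
    (∃ Q : Polynomial ℝ, Q.natDegree = N + 1 ∧ ∀ u : ℝ, Q.eval u = P u) := by
  intro A₁ A₂ A₃ P
  have hl2 : (2:ℝ) ≤ (l:ℝ) := by exact_mod_cast hl
  have hkey : ((l:ℝ)^2 + (l:ℝ))^2 = 2*((l:ℝ)^2 + (l:ℝ)) + 3*(N:ℝ) := by
    linear_combination (-6 : ℝ) * hs - 3 * hN
  have ht : (6:ℝ) ≤ (l:ℝ)^2 + (l:ℝ) := by nlinarith
  have hf24 : (24:ℝ) ≤ ((l:ℝ)^2 + (l:ℝ)) * (((l:ℝ)^2 + (l:ℝ)) - 2) := by nlinarith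
  have hs' : s = (((l:ℝ)^2 + (l:ℝ)) * (((l:ℝ)^2 + (l:ℝ)) - 2))/6 := by rw [hs]; ring
  have hsge : (4:ℝ) ≤ s := by rw [hs']; linarith
  have hN8 : 8 ≤ N := by
    have h8 : (8:ℝ) ≤ (N:ℝ) := by rw [hN]; linarith
    exact_mod_cast h8
  have hsN : s = (N:ℝ)/2 := by linarith
  have hPQ : ∀ u, P u = (hQ N ((l:ℝ)^2 + (l:ℝ)) A₀).eval u := by
    intro u
    rw [hQ_eval N hN8 ((l:ℝ)^2 + (l:ℝ)) A₀ u]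
    simp only [P, A₁, A₂, A₃]
    rw [← hN]
  have hPfun : P = fun u => (hQ N ((l:ℝ)^2 + (l:ℝ)) A₀).eval u := funext hPQ
  constructor
  · intro u
    rw [hPfun]
    have hd1 : deriv (fun u => (hQ N ((l:ℝ)^2 + (l:ℝ)) A₀).eval u)
        = fun u => (Polynomial.derivative (hQ N ((l:ℝ)^2 + (l:ℝ)) A₀)).eval u :=
      funext fun u => Polynomial.deriv _
    rw [hd1]
    have hd2 : deriv (fun u => (Polynomial.derivative (hQ N ((l:ℝ)^2 + (l:ℝ)) A₀)).eval u)
        = fun u => (Polynomial.derivative (Polynomial.derivative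
            (hQ N ((l:ℝ)^2 + (l:ℝ)) A₀))).eval u :=
      funext fun u => Polynomial.deriv _
    rw [hd2]
    have h0 := hR_zero N hN8 ((l:ℝ)^2 + (l:ℝ)) A₀ hkey
    have h1 := congrArg (Polynomial.eval u) h0
    simp only [Polynomial.eval_add, Polynomial.eval_mul, Polynomial.eval_sub,
      Polynomial.eval_neg, Polynomial.eval_pow, Polynomial.eval_C, Polynomial.eval_X,
      Polynomial.eval_zero, Polynomial.eval_ofNat] at h1
    rw [hsN]
    linear_combination h1
  · exact ⟨hQ N ((l:ℝ)^2 + (l:ℝ)) A₀, hQ_natDegree N _ A₀ hA₀,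
      fun u => (hPQ u).symm⟩
end

section
/- Let l ≥ 2 be an integer and s = l(l-1)(l+1)(l+2)/6, and define the polynomial coefficients Pₙ := -6s^{-2s-1}(2s)!((l-1)(l+2)-3s)·[(n-2s)(l-1)(l+2)-6s] / (n!((l-1)(l+2)+6s)·s·(l-1)³(l+2)³) for 0 ≤ n ≤ 2s-1, P_{2s} := (2(l-1)(l+2)-6)/(s^{2s+1}(l-1)²(l+2)²), P_{2s+1} := -1/(s^{2s+2}(l-1)(l+2)). Then P(u) = Σ_{n=0}^{2s+1}Pₙuⁿ is a polynomial solution of the confluent Heun equation u(u-2s)P'' + (-u² - 2u - 2s(-2s+1))P' + ((2s+1)u + 2 - l(l+1) + 4s(1-s))P = 0. -/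
open Polynomial
set_option maxHeartbeats 16000000

/-- Closed-form polynomial solution of degree `2s+1` to the confluent Heun equation
associated with the Kovacic family G7 (Chandrasekhar's second Liouvillian solution). -/
theorem stmt_13 (l : ℤ) (hl : 2 ≤ l) (s : ℝ)
    (hs : s = (l : ℝ) * ((l : ℝ) - 1) * ((l : ℝ) + 1) * ((l : ℝ) + 2) / 6)
    (N : ℕ) (hN : (N : ℝ) = 2 * s)
    (P : ℕ → ℝ)
    (hPn : ∀ n : ℕ, n ≤ N - 1 →
      P n = -(6 * s ^ (-(N : ℤ) - 1) * (Nat.factorial N : ℝ) *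
          (((l : ℝ) - 1) * ((l : ℝ) + 2) - 3 * s) *
          (((n : ℝ) - 2 * s) * ((l : ℝ) - 1) * ((l : ℝ) + 2) - 6 * s)) /
        ((Nat.factorial n : ℝ) * (((l : ℝ) - 1) * ((l : ℝ) + 2) + 6 * s) * s *
          ((l : ℝ) - 1) ^ 3 * ((l : ℝ) + 2) ^ 3))
    (hPN : P N = (2 * ((l : ℝ) - 1) * ((l : ℝ) + 2) - 6) /
      (s ^ (N + 1) * ((l : ℝ) - 1) ^ 2 * ((l : ℝ) + 2) ^ 2))
    (hPN1 : P (N + 1) = -(1 / (s ^ (N + 2) * ((l : ℝ) - 1) * ((l : ℝ) + 2)))) :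
    ∀ u : ℝ,
      u * (u - 2 * s) *
          deriv (deriv fun x => ∑ n ∈ Finset.range (N + 2), P n * x ^ n) u +
        (-u ^ 2 - 2 * u - 2 * s * (-2 * s + 1)) *
          deriv (fun x => ∑ n ∈ Finset.range (N + 2), P n * x ^ n) u +
        ((2 * s + 1) * u + 2 - (l : ℝ) * ((l : ℝ) + 1) + 4 * s * (1 - s)) *
          (∑ n ∈ Finset.range (N + 2), P n * u ^ n) = 0 := by
  intro u
  have hlR : (2 : ℝ) ≤ (l : ℝ) := by exact_mod_cast hl
  have hx : (0:ℝ) ≤ (l : ℝ) - 2 := by linarith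
  have hs4 : (4 : ℝ) ≤ s := by
    rw [hs]; nlinarith [pow_nonneg hx 2, pow_nonneg hx 3, pow_nonneg hx 4, hx]
  have hs0 : s ≠ 0 := by linarith
  have hN8 : 8 ≤ N := by
    have : (8 : ℝ) ≤ (N : ℝ) := by rw [hN]; linarith
    exact_mod_cast this
  have hl1 : (l : ℝ) - 1 ≠ 0 := by linarith
  have hl2 : (l : ℝ) + 2 ≠ 0 := by linarith
  have hzp : s ^ (-(N : ℤ) - 1) = (s ^ (N + 1))⁻¹ := by
    rw [show (-(N : ℤ) - 1) = -((N + 1 : ℕ) : ℤ) by push_cast; ring, zpow_neg, zpow_natCast]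
  obtain ⟨M, hMdef⟩ : ∃ M : ℝ, M = ((l : ℝ) - 1) * ((l : ℝ) + 2) := ⟨_, rfl⟩
  have hM4 : (4 : ℝ) ≤ M := by rw [hMdef]; nlinarith [hx]
  have hM0 : M ≠ 0 := by linarith
  have h6 : 6 * s = M * (M + 2) := by rw [hMdef, hs]; ring
  have hsM : s = M * (M + 2) / 6 := by linarith
  have hfacN : (Nat.factorial N : ℝ) ≠ 0 := by
    exact_mod_cast (Nat.factorial_pos N).ne'
  have hfacne : ∀ k : ℕ, (Nat.factorial k : ℝ) ≠ 0 := fun k => by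
    exact_mod_cast (Nat.factorial_pos k).ne'
  have hMs : M + 6 * s ≠ 0 := by nlinarith
  have hPn' : ∀ n : ℕ, n ≤ N - 1 →
      P n = -(6 * (s ^ (N + 1))⁻¹ * (Nat.factorial N : ℝ) * (M - 3 * s) *
          (((n : ℝ) - 2 * s) * M - 6 * s)) /
        ((Nat.factorial n : ℝ) * (M + 6 * s) * s * M ^ 3) := by
    intro n hn
    rw [hPn n hn, hzp, hMdef]
    have h1 : ((l:ℝ) - 1) * ((l:ℝ) + 2) ≠ 0 := mul_ne_zero hl1 hl2
    have h1 : ((l:ℝ) - 1) ^ 3 * ((l:ℝ) + 2) ^ 3 = (((l:ℝ) - 1) * ((l:ℝ) + 2)) ^ 3 := by ring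
    field_simp
  have hPN' : P N = (2 * M - 6) / (s ^ (N + 1) * M ^ 2) := by
    rw [hPN, hMdef]
    field_simp
  have hPN1' : P (N + 1) = -(1 / (s ^ (N + 2) * M)) := by
    rw [hPN1, hMdef]
    field_simp
  have hM2 : M + 2 ≠ 0 := by linarith
  have hM3 : M + 3 ≠ 0 := by linarith
  have hPn2 : ∀ n : ℕ, n ≤ N - 1 →
      P n = (6 * (s ^ (N + 1))⁻¹ * (Nat.factorial N : ℝ) * (3 * (n : ℝ) - (M + 2) * (M + 3))) /
        ((Nat.factorial n : ℝ) * (M ^ 2 * (M + 2) * (M + 3))) := by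
    intro n hn
    rw [hPn' n hn, hsM]
    have e : M + 6 * (M * (M + 2) / 6) = M * (M + 3) := by ring
    rw [e]
    have h1 : M * (M + 3) ≠ 0 := mul_ne_zero hM0 hM3
    have h2 : M * (M + 2) / 6 ≠ 0 := by
      rw [← hsM]; exact hs0
    field_simp
    ring
  have hPN12 : P (N + 1) = -(6 / (s ^ (N + 1) * M ^ 2 * (M + 2))) := by
    rw [hPN1', show N + 2 = (N + 1) + 1 from rfl, pow_succ, hsM]
    have h2 : M * (M + 2) / 6 ≠ 0 := by rw [← hsM]; exact hs0
    have hT : (M * (M + 2) / 6) ^ (N + 1) ≠ 0 := pow_ne_zero _ h2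
    field_simp
  obtain ⟨c0, hc0⟩ : ∃ c0 : ℝ, c0 = 2 - (l : ℝ) * ((l : ℝ) + 1) + 4 * s * (1 - s) := ⟨_, rfl⟩
  set p : Polynomial ℝ := ∑ n ∈ Finset.range (N + 2), monomial n (P n) with hp
  have hfun : (fun x : ℝ => ∑ n ∈ Finset.range (N + 2), P n * x ^ n)
      = fun x => Polynomial.eval x p := by
    funext x
    simp [hp, eval_finset_sum, eval_monomial]
  have heval : (∑ n ∈ Finset.range (N + 2), P n * u ^ n) = Polynomial.eval u p :=
    congrFun hfun u
  have hd1 : ∀ q : ℝ[X],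
      deriv (fun x => Polynomial.eval x q) = fun x => Polynomial.eval x (derivative q) :=
    fun q => funext fun x => Polynomial.deriv q
  have hb : ∀ k, p.coeff k = if k < N + 2 then P k else 0 := by
    intro k
    simp [hp, finset_sum_coeff, coeff_monomial, Finset.sum_ite_eq', Finset.mem_range]
  have hc0' : c0 = 2 - (M + 2) + 4 * s * (1 - s) := by rw [hc0, hMdef]; ring
  have hq : X * (X - C (2 * s)) * derivative (derivative p)
      + (-X ^ 2 - C 2 * X - C (2 * s * (-2 * s + 1))) * derivative p
      + (C (2 * s + 1) * X + C c0) * p = 0 := by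
    have hre : X * (X - C (2 * s)) * derivative (derivative p)
        + (-X ^ 2 - C 2 * X - C (2 * s * (-2 * s + 1))) * derivative p
        + (C (2 * s + 1) * X + C c0) * p
        = derivative (derivative p) * X ^ 2 - C (2 * s) * derivative (derivative p) * X ^ 1
          - derivative p * X ^ 2 - C 2 * derivative p * X ^ 1
          - C (2 * s * (-2 * s + 1)) * derivative p
          + C (2 * s + 1) * p * X ^ 1 + C c0 * p := by ring
    rw [hre]
    ext n
    simp only [coeff_add, coeff_sub, coeff_mul_X_pow', coeff_C_mul, coeff_derivative,
      coeff_zero, hb]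
    have hfact : ∀ k : ℕ, (Nat.factorial (k+1) : ℝ) = (k+1) * Nat.factorial k := by
      intro k; rw [Nat.factorial_succ]; push_cast; ring
    rcases Nat.lt_or_ge n 2 with h2 | h2
    · interval_cases n
      · norm_num
        rw [hPn' 0 (by omega), hPn' 1 (by omega), hc0']
        norm_num [Nat.factorial]
        generalize hT : s ^ (N + 1) = T
        have hT0 : T ≠ 0 := hT ▸ pow_ne_zero _ hs0
        rw [hsM]
        field_simp
        ring_nf
        try simp
      · -- n = 1
        norm_num
        rw [hPn' 0 (by omega), hPn' 1 (by omega), hPn' 2 (by omega), hc0']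
        norm_num [Nat.factorial]
        simp only [if_pos (show 0 < N from by omega)]
        generalize hT : s ^ (N + 1) = T
        have hT0 : T ≠ 0 := hT ▸ pow_ne_zero _ hs0
        rw [hsM]
        field_simp
        ring_nf
        try simp
    · obtain ⟨m, rfl⟩ : ∃ m, n = m + 2 := ⟨n - 2, by omega⟩
      simp only [if_pos (show 2 ≤ m + 2 by omega), if_pos (show 1 ≤ m + 2 by omega),
        show m + 2 - 2 = m from by omega, show m + 2 - 1 = m + 1 from by omega]
      have f2 : ((m+2).factorial : ℝ) = (m+2) * (m+1).factorial := by
        rw [show m+2 = (m+1)+1 from rfl, Nat.factorial_succ]; push_cast; ring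
      have f3 : ((m+3).factorial : ℝ) = (m+3) * ((m+2) * (m+1).factorial) := by
        rw [show m+3 = (m+2)+1 from rfl, Nat.factorial_succ]
        push_cast
        rw [f2]
        push_cast
        ring
      rcases (by omega : m + 4 ≤ N ∨ m + 3 = N ∨ m + 2 = N ∨ m + 1 = N ∨ m = N ∨ N + 1 ≤ m)
        with hA | hB | hC | hD | hE | hF
      · -- generic
        rw [if_pos (show m + 3 < N + 2 by omega), if_pos (show m + 2 < N + 2 by omega),
          if_pos (show m + 1 < N + 2 by omega),
          hPn2 (m+1) (by omega), hPn2 (m+2) (by omega), hPn2 (m+3) (by omega), hc0',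
          f2, f3]
        push_cast
        generalize hT : s ^ (N + 1) = T
        have hT0 : T ≠ 0 := hT ▸ pow_ne_zero _ hs0
        rw [hsM]
        field_simp
        ring_nf
        try simp
      · -- m + 3 = N
        have hPm3 : P (m+3) = (2 * M - 6) / (s ^ (N + 1) * M ^ 2) := by rw [hB]; exact hPN'
        have hmc : ((m : ℝ) + 3) = (N : ℝ) := by exact_mod_cast congrArg (Nat.cast : ℕ → ℝ) hB
        have hm : (m : ℝ) = 2 * s - 3 := by rw [hN] at hmc; linarith
        rw [if_pos (show m + 3 < N + 2 by omega), if_pos (show m + 2 < N + 2 by omega),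
          if_pos (show m + 1 < N + 2 by omega),
          hPn2 (m+1) (by omega), hPn2 (m+2) (by omega), hPm3, hc0', f2]
        have hNfac : (Nat.factorial N : ℝ) = (↑m + 3) * ((↑m + 2) * ↑(Nat.factorial (m+1))) := by
          rw [← hB]; exact f3
        rw [hNfac]
        push_cast
        generalize hT : s ^ (N + 1) = T
        have hT0 : T ≠ 0 := hT ▸ pow_ne_zero _ hs0
        have hm2ne : ((m : ℝ) + 2) ≠ 0 := by positivity
        field_simp
        rw [hm, hsM]
        ring
      · -- m + 2 = N
        have hPm2 : P (m+2) = (2 * M - 6) / (s ^ (N + 1) * M ^ 2) := by rw [hC]; exact hPN'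
        have hPm3 : P (m+3) = -(6 / (s ^ (N + 1) * M ^ 2 * (M + 2))) := by
          rw [show m + 3 = N + 1 from by omega]; exact hPN12
        have hmc : ((m : ℝ) + 2) = (N : ℝ) := by exact_mod_cast congrArg (Nat.cast : ℕ → ℝ) hC
        have hm : (m : ℝ) = 2 * s - 2 := by rw [hN] at hmc; linarith
        rw [if_pos (show m + 3 < N + 2 by omega), if_pos (show m + 2 < N + 2 by omega),
          if_pos (show m + 1 < N + 2 by omega),
          hPn2 (m+1) (by omega), hPm2, hPm3, hc0']
        have hNfac : (Nat.factorial N : ℝ) = (↑m + 2) * ↑(Nat.factorial (m+1)) := by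
          rw [← hC]; exact f2
        rw [hNfac]
        push_cast
        generalize hT : s ^ (N + 1) = T
        have hT0 : T ≠ 0 := hT ▸ pow_ne_zero _ hs0
        rw [hm, hsM]
        field_simp
        ring_nf
        try simp
      · -- m + 1 = N
        have hPm1 : P (m+1) = (2 * M - 6) / (s ^ (N + 1) * M ^ 2) := by rw [hD]; exact hPN'
        have hPm2 : P (m+2) = -(1 / (s ^ (N + 2) * M)) := by
          rw [show m + 2 = N + 1 from by omega]; exact hPN1'
        have hmc : ((m : ℝ) + 1) = (N : ℝ) := by exact_mod_cast congrArg (Nat.cast : ℕ → ℝ) hD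
        have hm : (m : ℝ) = 2 * s - 1 := by rw [hN] at hmc; linarith
        rw [if_neg (show ¬ (m + 3 < N + 2) by omega),
          if_pos (show m + 2 < N + 2 by omega), if_pos (show m + 1 < N + 2 by omega),
          hPm1, hPm2, hc0']
        have hpow : s ^ (N + 2) = s ^ (N + 1) * s := by
          rw [show N + 2 = (N + 1) + 1 from rfl, pow_succ]
        rw [hpow]
        push_cast
        generalize hT : s ^ (N + 1) = T
        have hT0 : T ≠ 0 := hT ▸ pow_ne_zero _ hs0
        rw [hm, hsM]
        field_simp
        ring_nf
        try simp
      · -- m = N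
        have hm : (m : ℝ) = 2 * s := by
          have : (m : ℝ) = (N : ℝ) := by exact_mod_cast congrArg (Nat.cast : ℕ → ℝ) hE
          rw [this, hN]
        rw [if_neg (show ¬ (m + 3 < N + 2) by omega), if_neg (show ¬ (m + 2 < N + 2) by omega),
          if_pos (show m + 1 < N + 2 by omega)]
        push_cast
        linear_combination (-(P (m + 1))) * hm
      · -- N + 1 ≤ m
        rw [if_neg (show ¬ (m + 3 < N + 2) by omega), if_neg (show ¬ (m + 2 < N + 2) by omega),
          if_neg (show ¬ (m + 1 < N + 2) by omega)]
        ring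
  rw [hfun, hd1, hd1, heval]
  have h2 := congrArg (Polynomial.eval u) hq
  simp only [eval_add, eval_mul, eval_sub, eval_neg, eval_pow, eval_X, eval_C, eval_zero,
    eval_ofNat] at h2
  linear_combination h2 - Polynomial.eval u p * hc0
end

section
/- Let n, j be natural numbers with j ≤ n, and let a, b, d be complex. Define Rₖ = a(k-1-n), Sₖ = d + k(b+k-1), Tₖ = (j-k)(k+1). Then the (n+1)×(n+1) tridiagonal matrix M with diagonal (S₀,...,Sₙ), subdiagonal (R₁,...,Rₙ), and superdiagonal (T₀,...,T_{n-1}) has the block lower-triangular form M = [[A, 0],[D, B]], where A is the leading (j+1)×(j+1) tridiagonal block and B is the trailing (n-j)×(n-j) tridiagonal block, and consequently det M = det A · det B. -/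
/-!
The superdiagonal entry `T j = (j - j)(j + 1)` vanishes, and it is the only entry of the
tridiagonal matrix joining rows `≤ j` to columns `> j`. So the matrix is block lower-triangular
with respect to the splitting `{0, …, j} ⊔ {j + 1, …, n}`, and the determinant of such a matrix
is the product of the determinants of its diagonal blocks.
-/

namespace Matrix

variable {α : Type*}

def tridiagonal [Zero α] (R S T : ℕ → α) (N : ℕ) : Matrix (Fin N) (Fin N) α := fun i k =>
  if (i : ℕ) = k then S i
  else if (i : ℕ) = k + 1 then R i
  else if (i : ℕ) + 1 = k then T i else 0

theorem tridiagonal_apply_eq_zero_of_le_of_lt [Zero α] {R S T : ℕ → α} {N j : ℕ} (hT : T j = 0)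
    {i k : Fin N} (hi : (i : ℕ) ≤ j) (hk : j < (k : ℕ)) : tridiagonal R S T N i k = 0 := by
  unfold tridiagonal
  rw [if_neg (by omega), if_neg (by omega)]
  split_ifs with hik
  · rw [show (i : ℕ) = j by omega, hT]
  · rfl

theorem det_eq_det_castAdd_mul_det_natAdd_of_apply_eq_zero [CommRing α] {m p N : ℕ}
    (h : m + p = N) (M : Matrix (Fin N) (Fin N) α)
    (hM : ∀ i k : Fin N, (i : ℕ) < m → m ≤ (k : ℕ) → M i k = 0) :
    M.det = (M.submatrix (Fin.cast h ∘ Fin.castAdd p) (Fin.cast h ∘ Fin.castAdd p)).det *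
      (M.submatrix (Fin.cast h ∘ Fin.natAdd m) (Fin.cast h ∘ Fin.natAdd m)).det := by
  set e : Fin m ⊕ Fin p ≃ Fin N := finSumFinEquiv.trans (finCongr h)
  have hzero : (M.submatrix e e).toBlocks₁₂ = 0 := by
    ext i k
    exact hM _ _ (by simp [e]) (by simp [e])
  rw [← det_submatrix_equiv_self e M, ← fromBlocks_toBlocks (M.submatrix e e), hzero,
    det_fromBlocks_zero₁₂]
  rfl

end Matrix

/-- Hautot's structural observation: when `c = j` the tridiagonal matrix of the linear
system for polynomial solutions of the confluent Heun equation is block lower-triangular,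
so its determinant factors as the product of the two diagonal block determinants. -/
theorem stmt_15 (n j : ℕ) (hj : j ≤ n) (a b d : ℂ) :
    let R : ℕ → ℂ := fun k => a * ((k : ℂ) - 1 - (n : ℂ))
    let S : ℕ → ℂ := fun k => d + (k : ℂ) * (b + (k : ℂ) - 1)
    let T : ℕ → ℂ := fun k => ((j : ℂ) - (k : ℂ)) * ((k : ℂ) + 1)
    let M : Matrix (Fin (n + 1)) (Fin (n + 1)) ℂ := fun i k =>
      if (i : ℕ) = (k : ℕ) then S i
      else if (i : ℕ) = (k : ℕ) + 1 then R i
      else if (i : ℕ) + 1 = (k : ℕ) then T i else 0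
    let A : Matrix (Fin (j + 1)) (Fin (j + 1)) ℂ := fun i k =>
      M ⟨(i : ℕ), by omega⟩ ⟨(k : ℕ), by omega⟩
    let B : Matrix (Fin (n - j)) (Fin (n - j)) ℂ := fun i k =>
      M ⟨j + 1 + (i : ℕ), by omega⟩ ⟨j + 1 + (k : ℕ), by omega⟩
    (∀ i k : Fin (n + 1), (i : ℕ) ≤ j → j < (k : ℕ) → M i k = 0) ∧
      M.det = A.det * B.det := by
  intro R S T M A B
  have hM : M = Matrix.tridiagonal R S T (n + 1) := rfl
  have hTj : T j = 0 := by simp [T]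
  have hblock : ∀ i k : Fin (n + 1), (i : ℕ) ≤ j → j < (k : ℕ) → M i k = 0 := fun _ _ hi hk =>
    hM ▸ Matrix.tridiagonal_apply_eq_zero_of_le_of_lt hTj hi hk
  exact ⟨hblock, Matrix.det_eq_det_castAdd_mul_det_natAdd_of_apply_eq_zero (by omega) M
    fun i k hi hk => hblock i k (by omega) (by omega)⟩
end

section
/- Let s be such that 2s is an integer with 2s ≥ 2, and l real. If the Frobenius series p₁(r) = (r-2)^{2s}Σ_{n≥0}Pₙ(r-2)ⁿ (P₀ ≠ 0) formally solves r(r-2)P'' + (6 - 2r - 4rs + r²s)P' + (2 - l(l+1) + 6s - rs(1+2s))P = 0, then its coefficients satisfy -s(2-n-2s+2s)P_{n-1} + (2-l(l+1)+n²+n(4s-3)+2s(2s-3)+4s(1-s))Pₙ + 2(1+n+2s)(1+n)P_{n+1} = 0, and the series can terminate to a polynomial of degree 2s+1 only if s = -l(l-1)(l+1)(l+2)/6. -/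
/-!
Write the solution as `G = X ^ N * Σ Pₙ Xⁿ` with `N = 2s ≥ 2`, in the variable `w = r - 2`.
Comparing the coefficients of `X ^ (N + n)` in the equation gives the three-term recurrence.
If the series stops after `P₁`, the recurrence at `n = 1` reads `s P₀ = (2s - L) P₁` with
`L = l(l+1)`; substituting this into the recurrence at `n = 0` leaves `(L² - 2L + 6s) P₁ = 0`,
and `L² - 2L = l(l-1)(l+1)(l+2)`.
-/

open PowerSeries

section

variable {R : Type*} [CommRing R]

noncomputable def g7Operator (s l : R) (G : R⟦X⟧) : R⟦X⟧ :=
  ((X + C 2) * X) * d⁄dX R (d⁄dX R G) +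
    (C 6 - C 2 * (X + C 2) - C (4 * s) * (X + C 2) + C s * (X + C 2) ^ 2) * d⁄dX R G +
    (C (2 - l * (l + 1) + 6 * s) - C (s * (1 + 2 * s)) * (X + C 2)) * G

theorem g7Operator_eq (s l : R) (G : R⟦X⟧) :
    g7Operator s l G =
      X * (X * d⁄dX R (d⁄dX R G)) + (2 : R) • (X * d⁄dX R (d⁄dX R G)) +
        (2 - 4 * s) • d⁄dX R G - (2 : R) • (X * d⁄dX R G) + s • (X * (X * d⁄dX R G)) +
        (2 - l * (l + 1) + 4 * s - 4 * s ^ 2) • G - (s * (1 + 2 * s)) • (X * G) := by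
  simp only [g7Operator, smul_eq_C_mul, map_sub, map_add, map_mul, map_pow, map_ofNat, map_one]
  ring

theorem coeff_g7Operator_add_two (s l : R) (G : R⟦X⟧) (k : ℕ) :
    coeff (k + 2) (g7Operator s l G) =
      s * (k - 2 * s) * coeff (k + 1) G +
        ((k + 2) * (k - 1) + 2 - l * (l + 1) + 4 * s - 4 * s ^ 2) * coeff (k + 2) G +
        2 * (k + 3) * (k + 3 - 2 * s) * coeff (k + 3) G := by
  simp only [g7Operator_eq, map_add, map_sub, map_smul, smul_eq_mul, coeff_succ_X_mul,
    coeff_derivative]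
  push_cast
  ring

def G7Recurrence (s l : R) (P : ℕ → R) : Prop :=
  ∀ n : ℕ, s * (n - 2) * (if n = 0 then 0 else P (n - 1)) +
    (n ^ 2 + (4 * s - 3) * n - 2 * s + 2 - l * (l + 1)) * P n +
    2 * (n + 1) * (n + 1 + 2 * s) * P (n + 1) = 0

theorem coeff_X_pow_mul_mk_add_pred (M n : ℕ) (P : ℕ → R) :
    coeff (M + n + 1) (X ^ (M + 2) * mk P) = if n = 0 then 0 else P (n - 1) := by
  rcases n with _ | n
  · simp [coeff_X_pow_mul']
  · rw [show M + (n + 1) + 1 = n + (M + 2) by omega, coeff_X_pow_mul, coeff_mk]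
    simp

theorem G7Recurrence.of_g7Operator_eq_zero {s l : R} {M : ℕ} {P : ℕ → R}
    (hM : (M : R) + 2 = 2 * s) (h : g7Operator s l (X ^ (M + 2) * mk P) = 0) :
    G7Recurrence s l P := by
  intro n
  have hcoeff := congrArg (coeff (M + n + 2)) h
  rw [coeff_g7Operator_add_two, map_zero, coeff_X_pow_mul_mk_add_pred,
    show M + n + 2 = n + (M + 2) by omega, show M + n + 3 = n + 1 + (M + 2) by omega,
    coeff_X_pow_mul, coeff_X_pow_mul, coeff_mk, coeff_mk] at hcoeff
  rw [Nat.cast_add, eq_sub_of_add_eq hM] at hcoeff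
  linear_combination hcoeff

end

theorem G7Recurrence.eq_of_terminates_at_one {K : Type*} [Field K] [CharZero K] {s l : K}
    {P : ℕ → K} (hrec : G7Recurrence s l P) (hP2 : P 2 = 0) (hP1 : P 1 ≠ 0) :
    s = -(l * (l - 1) * (l + 1) * (l + 2) / 6) := by
  have h0 := hrec 0
  have h1 := hrec 1
  simp only [one_ne_zero, if_false, hP2] at h0 h1
  push_cast at h0 h1
  have hdet : (l * (l + 1) * (l - 1) * (l + 2) + 6 * s) * P 1 = 0 := by
    linear_combination s * h0 + (2 - l * (l + 1) - 2 * s) * h1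
  linear_combination (mul_eq_zero.mp hdet).resolve_right hP1 / 6

open PowerSeries in
theorem stmt_18_general (s l : ℝ) (N : ℕ) (hN2 : 2 ≤ N) (hN : (N : ℝ) = 2 * s)
    (P : ℕ → ℝ)
    (hode :
      ((X + C 2) * X) * derivativeFun (derivativeFun (X ^ N * mk P)) +
        (C 6 - C 2 * (X + C 2) - C (4 * s) * (X + C 2) +
          C s * (X + C 2) ^ 2) * derivativeFun (X ^ N * mk P) +
        (C (2 - l * (l + 1) + 6 * s) - C (s * (1 + 2 * s)) * (X + C 2)) *
          (X ^ N * mk P) = 0) :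
    (∀ n : ℕ,
      -s * (2 - (n : ℝ) - 2 * s + 2 * s) * (if n = 0 then 0 else P (n - 1)) +
        (2 - l * (l + 1) + (n : ℝ) ^ 2 + (n : ℝ) * (4 * s - 3) + 2 * s * (2 * s - 3) +
          4 * s * (1 - s)) * P n +
        2 * (1 + (n : ℝ) + 2 * s) * (1 + (n : ℝ)) * P (n + 1) = 0) ∧
    ((∀ n : ℕ, 2 ≤ n → P n = 0) → P 1 ≠ 0 →
      s = -((l : ℝ) * (l - 1) * (l + 1) * (l + 2) / 6)) := by
  obtain ⟨M, rfl⟩ : ∃ M, N = M + 2 := ⟨N - 2, by omega⟩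
  have hrec : G7Recurrence s l P :=
    .of_g7Operator_eq_zero (by exact_mod_cast hN) hode
  exact ⟨fun n => by linear_combination hrec n,
    fun hterm hP1 => hrec.eq_of_terminates_at_one (hterm 2 le_rfl) hP1⟩

open PowerSeries in
/-- Family G7 around the regular singular point `r = 2`: if the Frobenius series
`p₁(r) = (r-2)^{2s} Σ Pₙ (r-2)ⁿ` (written in the variable `w = r - 2`, i.e. the power
series `X^{2s}·Σ Pₙ Xⁿ`) formally solves the confluent Heun-type equation, then its
coefficients satisfy the stated three-term recurrence, and the series can terminate to a
polynomial of degree `2s+1` only if `s = -l(l-1)(l+1)(l+2)/6`. -/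
theorem stmt_18 (s l : ℝ) (N : ℕ) (hN2 : 2 ≤ N) (hN : (N : ℝ) = 2 * s)
    (P : ℕ → ℝ) (hP0 : P 0 ≠ 0)
    (hode :
      ((X + C 2) * X) * derivativeFun (derivativeFun (X ^ N * mk P)) +
        (C 6 - C 2 * (X + C 2) - C (4 * s) * (X + C 2) +
          C s * (X + C 2) ^ 2) * derivativeFun (X ^ N * mk P) +
        (C (2 - l * (l + 1) + 6 * s) - C (s * (1 + 2 * s)) * (X + C 2)) *
          (X ^ N * mk P) = 0) :
    (∀ n : ℕ,
      -s * (2 - (n : ℝ) - 2 * s + 2 * s) * (if n = 0 then 0 else P (n - 1)) +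
        (2 - l * (l + 1) + (n : ℝ) ^ 2 + (n : ℝ) * (4 * s - 3) + 2 * s * (2 * s - 3) +
          4 * s * (1 - s)) * P n +
        2 * (1 + (n : ℝ) + 2 * s) * (1 + (n : ℝ)) * P (n + 1) = 0) ∧
    ((∀ n : ℕ, 2 ≤ n → P n = 0) → P 1 ≠ 0 →
      s = -((l : ℝ) * (l - 1) * (l + 1) * (l + 2) / 6)) :=
  stmt_18_general s l N hN2 hN P hode
end
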